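/- At every point x ∈ ℝ^N all of whose blocks are nonzero (x^{(j)} ≠ 0 for j = 1,…,k), the homogeneous norm satisfies the Euler-type identity ∑_{i=1}^k σ_i ( x^{(i)} · ∇_{x^{(i)}} [[x]]_λ ) = [[x]]_λ, where · denotes the Euclidean inner product on ℝ^{N_i} and ∇_{x^{(i)}} the gradient in the variables of the i-th block. -/

import Mathlib

open MeasureTheory Finset

noncomputable section

/-- `ℝ^N = ℝ^{N_1} × ⋯ × ℝ^{N_k}` with the Euclidean norm. -/
abbrev Eb {k : ℕ} (N : Fin k → ℕ) : Type :=
  PiLp 2 (fun i : Fin k => EuclideanSpace ℝ (Fin (N i)))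

instance {k : ℕ} (N : Fin k → ℕ) : MeasurableSpace (Eb N) :=
  MeasurableSpace.comap WithLp.ofLp MeasurableSpace.pi
instance {k : ℕ} (N : Fin k → ℕ) : BorelSpace (Eb N) := PiLp.borelSpace 2

/-- `λ_i(x) = ∏_j |x^{(j)}|^{α_{ij}}`. -/
def lamF {k : ℕ} (N : Fin k → ℕ) (α : Fin k → Fin k → ℝ) (i : Fin k) (x : Eb N) : ℝ :=
  ∏ j : Fin k, ‖x j‖ ^ (α i j)

/-- the dilations `δ_r(x) = (r^{σ_1} x^{(1)}, …, r^{σ_k} x^{(k)})`. -/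
def dilF {k : ℕ} (N : Fin k → ℕ) (σ : Fin k → ℝ) (r : ℝ) (x : Eb N) : Eb N :=
  (WithLp.equiv 2 _).symm (fun i => (r ^ σ i) • x i)

/-- the homogeneous norm `[[x]]_λ`. -/
def hnormF {k : ℕ} (N : Fin k → ℕ) (α : Fin k → Fin k → ℝ) (σ : Fin k → ℝ) (x : Eb N) : ℝ :=
  (∑ j : Fin k, (∏ i ∈ Finset.univ.erase j, (lamF N α i x) ^ 2) * (σ j) ^ 2 * ‖x j‖ ^ 2)
    ^ (1 / (2 * (1 + ∑ i : Fin k, (σ i - 1))))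

/-- the homogeneous distance from the origin `‖x‖_λ`. -/
def dnormF {k : ℕ} (N : Fin k → ℕ) (σ : Fin k → ℝ) (x : Eb N) : ℝ :=
  (∑ j : Fin k, ‖x j‖ ^ (2 * ∏ i ∈ Finset.univ.erase j, σ i))
    ^ (1 / (2 * ∏ i : Fin k, σ i))

/-- `∇_λ u = (λ_1 ∇_{x^{(1)}} u, …, λ_k ∇_{x^{(k)}} u)`. -/
def lgradF {k : ℕ} (N : Fin k → ℕ) (α : Fin k → Fin k → ℝ) (u : Eb N → ℝ) (x : Eb N) : Eb N :=
  (WithLp.equiv 2 _).symm (fun i => lamF N α i x • (gradient u x) i)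

/-- the standard basis vector of `ℝ^N` in block `i`, coordinate `j`. -/
def basisVecF {k : ℕ} (N : Fin k → ℕ) (i : Fin k) (j : Fin (N i)) : Eb N :=
  (WithLp.equiv 2 _).symm (Pi.single i (EuclideanSpace.single j 1))

/-- `div_λ h = ∑_i λ_i div_{x^{(i)}} h^{(i)}`. -/
def divlamF {k : ℕ} (N : Fin k → ℕ) (α : Fin k → Fin k → ℝ) (h : Eb N → Eb N) (x : Eb N) : ℝ :=
  ∑ i : Fin k, lamF N α i x * ∑ j : Fin (N i), fderiv ℝ h x (basisVecF N i j) i j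

/-- `Δ_λ u = ∑_i λ_i^2 Δ_{x^{(i)}} u`. -/
def lapLamF {k : ℕ} (N : Fin k → ℕ) (α : Fin k → Fin k → ℝ) (u : Eb N → ℝ) (x : Eb N) : ℝ :=
  ∑ i : Fin k, (lamF N α i x) ^ 2 * ∑ j : Fin (N i),
    fderiv ℝ (fun y => fderiv ℝ u y (basisVecF N i j)) x (basisVecF N i j)

/-- the homogeneous dimension `Q = σ_1 N_1 + ⋯ + σ_k N_k`. -/
def QF {k : ℕ} (N : Fin k → ℕ) (σ : Fin k → ℝ) : ℝ :=
  ∑ i : Fin k, σ i * N i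

/-! The weights are chosen so that `λ_i(δ_r x) = r^{σ_i - 1} λ_i(x)` for the dilations
`δ_r x = (r^{σ_1} x^{(1)}, …, r^{σ_k} x^{(k)})`; consequently every summand under the root in
`[[x]]_λ` scales by `r^{2(1 + ∑ (σ_i - 1))}` and `[[δ_r x]]_λ = r [[x]]_λ`. Differentiating this
at `r = 1` gives the identity, since `d/dr δ_r x = (σ_i x^{(i)})_i` there; differentiability of
`[[·]]_λ` at `x` is where the nonvanishing of the blocks enters. -/

open Filter Topology

section Weights

variable {k : ℕ} {α : Fin k → Fin k → ℝ} {σ : Fin k → ℝ}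

theorem one_le_of_weight_recursion (hα : ∀ i j, 0 ≤ α i j)
    (hσ : ∀ i, σ i = 1 + ∑ j : Fin k, if j < i then σ j * α i j else 0) (i : Fin k) :
    1 ≤ σ i := by
  induction i using WellFoundedLT.induction with
  | _ i ih =>
    have : 0 ≤ ∑ j : Fin k, if j < i then σ j * α i j else 0 :=
      Finset.sum_nonneg fun j _ => by
        split_ifs with h
        · exact mul_nonneg (zero_le_one.trans (ih j h)) (hα i j)
        · exact le_rfl
    linarith [hσ i]

theorem sum_weight_mul_eq_sub_one (hα0 : ∀ i j : Fin k, i ≤ j → α i j = 0)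
    (hσ : ∀ i, σ i = 1 + ∑ j : Fin k, if j < i then σ j * α i j else 0) (i : Fin k) :
    ∑ j, σ j * α i j = σ i - 1 := by
  have : (∑ j : Fin k, if j < i then σ j * α i j else 0) = ∑ j, σ j * α i j :=
    Finset.sum_congr rfl fun j _ => by
      split_ifs with h
      · rfl
      · rw [hα0 i j (not_lt.mp h), mul_zero]
  linarith [hσ i]

end Weights

def hnormRadicandF {k : ℕ} (N : Fin k → ℕ) (α : Fin k → Fin k → ℝ) (σ : Fin k → ℝ) (x : Eb N) :
    ℝ :=
  ∑ j : Fin k, (∏ i ∈ Finset.univ.erase j, (lamF N α i x) ^ 2) * (σ j) ^ 2 * ‖x j‖ ^ 2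

section Homogeneity

variable {k : ℕ} {N : Fin k → ℕ} {α : Fin k → Fin k → ℝ} {σ : Fin k → ℝ} {r : ℝ}

theorem hnormF_eq_rpow (x : Eb N) :
    hnormF N α σ x = hnormRadicandF N α σ x ^ (1 / (2 * (1 + ∑ i : Fin k, (σ i - 1)))) :=
  rfl

theorem hnormRadicandF_nonneg (x : Eb N) : 0 ≤ hnormRadicandF N α σ x := by
  unfold hnormRadicandF
  positivity

theorem dilF_apply (x : Eb N) (j : Fin k) : dilF N σ r x j = r ^ σ j • x j :=
  rfl

theorem dilF_one (x : Eb N) : dilF N σ 1 x = x := by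
  ext j : 1
  rw [dilF_apply, Real.one_rpow, one_smul]

theorem norm_dilF_apply (hr : 0 ≤ r) (x : Eb N) (j : Fin k) :
    ‖dilF N σ r x j‖ = r ^ σ j * ‖x j‖ := by
  rw [dilF_apply, norm_smul, Real.norm_of_nonneg (Real.rpow_nonneg hr _)]

theorem lamF_dilF (hr : 0 < r) {i : Fin k} (hi : ∑ j, σ j * α i j = σ i - 1) (x : Eb N) :
    lamF N α i (dilF N σ r x) = r ^ (σ i - 1) * lamF N α i x := by
  simp only [lamF, norm_dilF_apply hr.le,
    Real.mul_rpow (Real.rpow_nonneg hr.le _) (norm_nonneg _), ← Real.rpow_mul hr.le,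
    Finset.prod_mul_distrib, ← Real.rpow_sum_of_pos hr, hi]

theorem hnormRadicandF_dilF (hr : 0 < r) (hexp : ∀ i, ∑ j, σ j * α i j = σ i - 1) (x : Eb N) :
    hnormRadicandF N α σ (dilF N σ r x) =
      r ^ (2 * (1 + ∑ i : Fin k, (σ i - 1))) * hnormRadicandF N α σ x := by
  have hscale : ∀ j, (∏ i ∈ Finset.univ.erase j, (r ^ (σ i - 1)) ^ 2) * (r ^ σ j) ^ 2 =
      r ^ (2 * (1 + ∑ i : Fin k, (σ i - 1))) := by
    intro j
    have hσj : (r ^ σ j) ^ 2 = r ^ 2 * (r ^ (σ j - 1)) ^ 2 := by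
      rw [← mul_pow, mul_comm r, ← Real.rpow_add_one hr.ne', sub_add_cancel]
    calc (∏ i ∈ Finset.univ.erase j, (r ^ (σ i - 1)) ^ 2) * (r ^ σ j) ^ 2
        = r ^ 2 * ∏ i, (r ^ (σ i - 1)) ^ 2 := by
          rw [hσj, ← Finset.prod_erase_mul _ _ (Finset.mem_univ j)]; ring
      _ = (r ^ (1 + ∑ i : Fin k, (σ i - 1))) ^ 2 := by
          rw [Finset.prod_pow, Real.rpow_add hr, Real.rpow_one, Real.rpow_sum_of_pos hr, mul_pow]
      _ = r ^ (2 * (1 + ∑ i : Fin k, (σ i - 1))) := by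
          rw [← Real.rpow_natCast, ← Real.rpow_mul hr.le, Nat.cast_ofNat, mul_comm]
  simp only [hnormRadicandF, Finset.mul_sum, lamF_dilF hr (hexp _), norm_dilF_apply hr.le,
    mul_pow, Finset.prod_mul_distrib]
  refine Finset.sum_congr rfl fun j _ => ?_
  rw [← hscale j]
  ring

theorem hnormF_dilF (hr : 0 < r) (hexp : ∀ i, ∑ j, σ j * α i j = σ i - 1)
    (hdeg : 1 + ∑ i : Fin k, (σ i - 1) ≠ 0) (x : Eb N) :
    hnormF N α σ (dilF N σ r x) = r * hnormF N α σ x := by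
  rw [hnormF_eq_rpow, hnormF_eq_rpow, hnormRadicandF_dilF hr hexp,
    Real.mul_rpow (Real.rpow_nonneg hr.le _) (hnormRadicandF_nonneg _), ← Real.rpow_mul hr.le,
    mul_one_div_cancel (mul_ne_zero two_ne_zero hdeg), Real.rpow_one]

end Homogeneity

section Differentiability

variable {k : ℕ} {N : Fin k → ℕ} {α : Fin k → Fin k → ℝ} {σ : Fin k → ℝ} {x : Eb N}

theorem differentiableAt_norm_apply (hx : ∀ j, x j ≠ 0) (j : Fin k) :
    DifferentiableAt ℝ (fun y : Eb N => ‖y j‖) x :=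
  (PiLp.proj 2 (fun i => EuclideanSpace ℝ (Fin (N i))) j).differentiableAt.norm ℝ (hx j)

theorem differentiableAt_lamF (hx : ∀ j, x j ≠ 0) (i : Fin k) :
    DifferentiableAt ℝ (lamF N α i) x :=
  (HasFDerivAt.finsetProd fun j _ =>
    ((differentiableAt_norm_apply hx j).rpow_const
      (Or.inl (norm_ne_zero_iff.mpr (hx j)))).hasFDerivAt).differentiableAt

theorem differentiableAt_hnormRadicandF (hx : ∀ j, x j ≠ 0) :
    DifferentiableAt ℝ (hnormRadicandF N α σ) x := by
  have := differentiableAt_lamF (α := α) hx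
  have := differentiableAt_norm_apply hx
  unfold hnormRadicandF
  fun_prop

theorem hnormRadicandF_pos (hk : 0 < k) (hσ : ∀ j, σ j ≠ 0) (hx : ∀ j, x j ≠ 0) :
    0 < hnormRadicandF N α σ x := by
  have : Nonempty (Fin k) := ⟨⟨0, hk⟩⟩
  refine Finset.sum_pos (fun j _ => ?_) Finset.univ_nonempty
  have hlam : ∀ i, 0 < lamF N α i x := fun i =>
    Finset.prod_pos fun j _ => Real.rpow_pos_of_pos (norm_pos_iff.mpr (hx j)) _
  have hσj := hσ j
  have hxj := hx j
  have hprod := Finset.prod_pos fun i (_ : i ∈ Finset.univ.erase j) => pow_pos (hlam i) 2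
  positivity

theorem differentiableAt_hnormF (hx : ∀ j, x j ≠ 0) (hpos : 0 < hnormRadicandF N α σ x) :
    DifferentiableAt ℝ (hnormF N α σ) x :=
  (differentiableAt_hnormRadicandF hx).rpow_const (Or.inl hpos.ne')

end Differentiability

theorem fderiv_apply_eq_of_homogeneous_along {E : Type*} [NormedAddCommGroup E]
    [NormedSpace ℝ E] {f : E → ℝ} {c : ℝ → E} {x v : E} (hf : DifferentiableAt ℝ f x)
    (hc : HasDerivAt c v 1) (hc1 : c 1 = x) (hhom : ∀ᶠ r in 𝓝 1, f (c r) = r * f x) :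
    fderiv ℝ f x v = f x := by
  subst hc1
  refine (hf.hasFDerivAt.comp_hasDerivAt 1 hc).unique ?_
  simpa [Function.comp_def] using
    ((hasDerivAt_id (1 : ℝ)).mul_const (f (c 1))).congr_of_eventuallyEq hhom

theorem hasDerivAt_dilF_one {k : ℕ} {N : Fin k → ℕ} (σ : Fin k → ℝ) (x : Eb N) :
    HasDerivAt (fun r => dilF N σ r x) (WithLp.toLp 2 fun i => σ i • x i) 1 := by
  have : HasDerivAt (fun r : ℝ => fun i => r ^ σ i • x i) (fun i => σ i • x i) 1 :=
    hasDerivAt_pi.mpr fun i => by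
      simpa using (Real.hasDerivAt_rpow_const (x := 1) (Or.inl one_ne_zero)).smul_const (x i)
  exact (PiLp.continuousLinearEquiv 2 ℝ _).symm.hasFDerivAt.comp_hasDerivAt 1 this

theorem hnorm_euler_identity_general {k : ℕ} (hk : 0 < k)
    (N : Fin k → ℕ)
    (α : Fin k → Fin k → ℝ) (σ : Fin k → ℝ)
    (hα : ∀ i j, 0 ≤ α i j) (hα0 : ∀ i j : Fin k, i ≤ j → α i j = 0)
    (hσ : ∀ i, σ i = 1 + ∑ j : Fin k, if j < i then σ j * α i j else 0)
    (x : Eb N) (hx : ∀ j, x j ≠ 0) :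
    ∑ i : Fin k, σ i * (inner ℝ (x i) ((gradient (hnormF N α σ) x) i) : ℝ) =
      hnormF N α σ x := by
  have hσ1 := one_le_of_weight_recursion hα hσ
  have hexp := sum_weight_mul_eq_sub_one hα0 hσ
  have hdeg : 0 < 1 + ∑ i : Fin k, (σ i - 1) := by
    linarith [Finset.sum_nonneg fun i (_ : i ∈ Finset.univ) => sub_nonneg.mpr (hσ1 i)]
  have hdiff : DifferentiableAt ℝ (hnormF N α σ) x :=
    differentiableAt_hnormF hx
      (hnormRadicandF_pos hk (fun j => (zero_lt_one.trans_le (hσ1 j)).ne') hx)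
  have heuler := fderiv_apply_eq_of_homogeneous_along hdiff (hasDerivAt_dilF_one σ x)
    (dilF_one x) (eventually_gt_nhds one_pos |>.mono fun r hr => hnormF_dilF hr hexp hdeg.ne' x)
  rw [← heuler, ← inner_gradient_left, PiLp.inner_apply]
  refine Finset.sum_congr rfl fun i _ => ?_
  rw [PiLp.toLp_apply, real_inner_smul_right, real_inner_comm]

/-- the Euler-type identity
`∑_i σ_i (x^{(i)} · ∇_{x^{(i)}} [[x]]_λ) = [[x]]_λ` at every point all of whose blocks are
nonzero. -/
theorem hnorm_euler_identity {k : ℕ} (hk : 0 < k)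
    (N : Fin k → ℕ) (hN : ∀ i, 1 ≤ N i)
    (α : Fin k → Fin k → ℝ) (σ : Fin k → ℝ)
    (hα : ∀ i j, 0 ≤ α i j) (hα0 : ∀ i j : Fin k, i ≤ j → α i j = 0)
    (hσ : ∀ i, σ i = 1 + ∑ j : Fin k, if j < i then σ j * α i j else 0)
    (x : Eb N) (hx : ∀ j, x j ≠ 0) :
    ∑ i : Fin k, σ i * (inner ℝ (x i) ((gradient (hnormF N α σ) x) i) : ℝ) =
      hnormF N α σ x :=
  hnorm_euler_identity_general hk N α σ hα hα0 hσ x hx
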